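/- arXiv:2511.04125 — 3 statements merged into one kernel-verified Lean document; each statement's English description precedes it below -/
import Mathlib

section
/- Let a be a prime, b < a, and let V ∈ Z^{(a-1) × b} be the (a,b) reduced Vandermonde matrix with V_{i,j} = (i^{j-1} mod a). If v ∈ Z^{a-1} is a nonzero vector with vV = 0, then v has more than b nonzero entries. -/
/-- The `(a, b)` reduced Vandermonde matrix: `V i j = (i+1)^j mod a`. -/
def rvdm (a b : ℕ) : Matrix (Fin (a - 1)) (Fin b) ℤ :=
  Matrix.of fun i j => (((i.val + 1) ^ j.val % a : ℕ) : ℤ)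

open Finset Function

namespace Matrix

/-- Otherwise the restriction of `v` to its support lies in the left kernel of one of the
nonsingular square matrices of `hV`. -/
theorem lt_card_filter_ne_zero_of_vecMul_eq_zero {ι R : Type*} [Fintype ι] [CommRing R]
    [NoZeroDivisors R] [DecidableEq R] {n : ℕ} {V : Matrix ι (Fin n) R}
    (hV : ∀ k (hk : k ≤ n) (e : Fin k → ι), Injective e →
      (V.submatrix e (Fin.castLE hk)).det ≠ 0)
    {v : ι → R} (hv : v ≠ 0) (hker : vecMul v V = 0) : n < #{i | v i ≠ 0} := by
  by_contra! hle
  set s := univ.filter fun i => v i ≠ 0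
  let e : Fin #s ≃ s := s.equivFin.symm
  have hsub :
      vecMul (fun p => v (e p)) (V.submatrix (fun p => (e p : ι)) (Fin.castLE hle)) = 0 := by
    funext q
    have hq := congrFun hker (Fin.castLE hle q)
    simp only [vecMul, dotProduct, submatrix_apply, Pi.zero_apply] at hq ⊢
    rw [← hq, e.sum_comp fun i : s => v i * V i (Fin.castLE hle q),
      sum_coe_sort s fun i => v i * V i (Fin.castLE hle q),
      sum_filter_of_ne fun i _ h => left_ne_zero_of_mul h]
  have hzero := eq_zero_of_vecMul_eq_zero (hV _ hle _ (Subtype.val_injective.comp e.injective)) hsub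
  refine hv (funext fun i => by_contra fun hi => hi ?_)
  simpa using congrFun hzero (e.symm ⟨i, by simpa [s] using hi⟩)

end Matrix

theorem rvdm_submatrix_map_intCast {a b k : ℕ} (hk : k ≤ b) (e : Fin k → Fin (a - 1)) :
    ((rvdm a b).submatrix e (Fin.castLE hk)).map (Int.cast : ℤ → ZMod a) =
      Matrix.vandermonde fun p => ((e p : ℕ) + 1 : ZMod a) := by
  ext p q
  simp [rvdm, Matrix.vandermonde_apply]

theorem injective_natCast_succ_zmod (a : ℕ) :
    Injective fun i : Fin (a - 1) => ((i : ℕ) + 1 : ZMod a) := by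
  intro i j hij
  have hlt : ∀ i : Fin (a - 1), (i : ℕ) + 1 < a := fun i => by omega
  have := congrArg ZMod.val hij
  simp only [← Nat.cast_succ, ZMod.val_natCast_of_lt (hlt i),
    ZMod.val_natCast_of_lt (hlt j)] at this
  exact Fin.ext (by omega)

/-- Modulo the prime `a` these submatrices are Vandermonde matrices on distinct nodes. -/
theorem det_rvdm_submatrix_ne_zero {a b k : ℕ} (ha : a.Prime) (hk : k ≤ b)
    (e : Fin k → Fin (a - 1)) (he : Injective e) :
    ((rvdm a b).submatrix e (Fin.castLE hk)).det ≠ 0 := by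
  have := Fact.mk ha
  intro h
  have hmod := Int.cast_det (R := ZMod a) ((rvdm a b).submatrix e (Fin.castLE hk))
  rw [h, rvdm_submatrix_map_intCast, Int.cast_zero] at hmod
  exact Matrix.det_vandermonde_ne_zero_iff.mpr ((injective_natCast_succ_zmod a).comp he) hmod.symm

theorem stmt5_general (a b : ℕ) (ha : Nat.Prime a)
    (v : Fin (a - 1) → ℤ) (hv : v ≠ 0)
    (hker : Matrix.vecMul v (rvdm a b) = 0) :
    b < (Finset.univ.filter fun i => v i ≠ 0).card :=
  Matrix.lt_card_filter_ne_zero_of_vecMul_eq_zero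
    (fun _ hk e he => det_rvdm_submatrix_ne_zero ha hk e he) hv hker

/-- If `v ≠ 0` and `v V = 0` for the `(a,b)` reduced Vandermonde matrix `V`
    (with `a` prime, `b < a`), then `v` has more than `b` nonzero entries. -/
theorem stmt5 (a b : ℕ) (ha : Nat.Prime a) (hb : b < a)
    (v : Fin (a - 1) → ℤ) (hv : v ≠ 0)
    (hker : Matrix.vecMul v (rvdm a b) = 0) :
    b < (Finset.univ.filter fun i => v i ≠ 0).card :=
  stmt5_general a b ha v hv hker
end

section
/- Let Y ∈ {±1}^{k × m} have pairwise orthogonal rows, let v ∈ Z^k with ‖v‖_0 ≥ L, and suppose all nonzero coordinates of vY lie within a set of columns of size at most m' ≤ m. Then for p > 2: ‖vY‖_p ≥ (m')^{1/p - 1/2} · (m·L)^{1/2}. -/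
/-!
Orthogonality of the `±1` rows gives `Y Yᵀ = m I`, hence `‖vY‖₂² = m ‖v‖₂² ≥ m ‖v‖₀ ≥ m L`,
since a nonzero integer has square at least `1`. As `vY` is supported on at most `m'` columns,
the power-mean inequality on that support gives `‖vY‖₂ ≤ (m')^{1/2 - 1/p} ‖vY‖_p`.
-/

open Finset Matrix

theorem Matrix.vecMul_dotProduct_vecMul_of_mul_transpose_eq_smul_one {k m R : Type*}
    [Fintype k] [DecidableEq k] [Fintype m] [CommRing R] {Y : Matrix k m R} {c : R}
    (hY : Y * Yᵀ = c • 1) (v : k → R) : (v ᵥ* Y) ⬝ᵥ (v ᵥ* Y) = c * (v ⬝ᵥ v) := by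
  rw [← dotProduct_mulVec, ← vecMul_transpose, vecMul_vecMul, hY, vecMul_smul, vecMul_one,
    dotProduct_smul, smul_eq_mul]

theorem Matrix.mul_transpose_eq_smul_one_of_sign_orthogonal {k m R : Type*}
    [Fintype k] [DecidableEq k] [Fintype m] [CommRing R] {Y : Matrix k m R}
    (hY : ∀ i j, Y i j = 1 ∨ Y i j = -1) (horth : ∀ i j, i ≠ j → ∑ l, Y i l * Y j l = 0) :
    Y * Yᵀ = (Fintype.card m : R) • 1 := by
  ext i j
  rw [mul_apply, smul_apply, one_apply]
  simp only [transpose_apply]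
  split_ifs with hij
  · subst hij
    have hsq : ∀ l, Y i l * Y i l = 1 := fun l => by rcases hY i l with h | h <;> simp [h]
    simp [hsq]
  · simp [horth i j hij]

theorem Int.card_support_le_dotProduct_self {k : Type*} [Fintype k] (v : k → ℤ) :
    (#{i | v i ≠ 0} : ℤ) ≤ v ⬝ᵥ v := by
  rw [card_filter, dotProduct, Nat.cast_sum]
  refine sum_le_sum fun i _ => ?_
  split_ifs with h
  · simpa [← sq] using Int.one_le_abs h
  · simpa using mul_self_nonneg (v i)

theorem Real.L2_le_card_rpow_mul_Lp {ι : Type*} (s : Finset ι) (f : ι → ℝ) {p : ℝ}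
    (hp : 2 ≤ p) :
    (∑ i ∈ s, f i ^ 2) ^ (1 / 2 : ℝ) ≤
      (#s : ℝ) ^ (1 / 2 - 1 / p) * (∑ i ∈ s, |f i| ^ p) ^ (1 / p) := by
  have hp0 : 0 < p := by linarith
  have hpow : ∀ i, (f i ^ 2) ^ (p / 2) = |f i| ^ p := fun i => by
    rw [← sq_abs, ← Real.rpow_natCast, ← Real.rpow_mul (abs_nonneg _)]
    norm_num [mul_div_cancel₀]
  have h := rpow_sum_le_const_mul_sum_rpow_of_nonneg s (f := fun i => f i ^ 2)
    (p := p / 2) (by linarith) (fun i _ => sq_nonneg _)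
  simp only [hpow] at h
  have h' := Real.rpow_le_rpow (by positivity) h (by positivity : 0 ≤ 1 / p)
  rw [← Real.rpow_mul (by positivity), Real.mul_rpow (by positivity) (by positivity),
    ← Real.rpow_mul (by positivity)] at h'
  convert h' using 3 <;> field_simp

theorem Real.card_rpow_mul_L2_le_Lp_of_support_subset {ι : Type*} [Fintype ι] {f : ι → ℝ}
    {s : Finset ι} (hs : ∀ i ∉ s, f i = 0) {n : ℕ} (hn : #s ≤ n) {p : ℝ} (hp : 2 ≤ p) :
    (n : ℝ) ^ (1 / p - 1 / 2) * (∑ i, f i ^ 2) ^ (1 / 2 : ℝ) ≤ (∑ i, |f i| ^ p) ^ (1 / p) := by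
  obtain hs0 | hs0 := Nat.eq_zero_or_pos #s
  · have hf : ∀ i, f i = 0 := fun i => hs i (by simp_all)
    simp [hf]
    positivity
  have hsum : ∀ g : ℝ → ℝ, g 0 = 0 → ∑ i ∈ s, g (f i) = ∑ i, g (f i) := fun g hg =>
    sum_subset (subset_univ s) fun i _ hi => by rw [hs i hi, hg]
  have hl2 := Real.L2_le_card_rpow_mul_Lp s f hp
  rw [hsum (· ^ 2) (by simp),
    hsum (|·| ^ p) (by simp [Real.zero_rpow (show p ≠ 0 by linarith)])] at hl2
  have hs_pos : (0 : ℝ) < #s := by exact_mod_cast hs0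
  have hexp : 1 / p - 1 / 2 ≤ 0 := by
    rw [sub_nonpos]; exact one_div_le_one_div_of_le two_pos hp
  calc (n : ℝ) ^ (1 / p - 1 / 2) * (∑ i, f i ^ 2) ^ (1 / 2 : ℝ)
      ≤ (#s : ℝ) ^ (1 / p - 1 / 2) * (∑ i, f i ^ 2) ^ (1 / 2 : ℝ) :=
        mul_le_mul_of_nonneg_right
          (Real.rpow_le_rpow_of_nonpos hs_pos (Nat.cast_le.mpr hn) hexp) (by positivity)
    _ ≤ (#s : ℝ) ^ (1 / p - 1 / 2) *
          ((#s : ℝ) ^ (1 / 2 - 1 / p) * (∑ i, |f i| ^ p) ^ (1 / p)) := by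
        gcongr
    _ = (∑ i, |f i| ^ p) ^ (1 / p) := by
        rw [← mul_assoc, ← Real.rpow_add hs_pos]; simp

theorem stmt15_general (k m m' L : ℕ) (Y : Matrix (Fin k) (Fin m) ℤ)
    (hY : ∀ i j, Y i j = 1 ∨ Y i j = -1)
    (horth : ∀ i j, i ≠ j → ∑ l, Y i l * Y j l = 0)
    (v : Fin k → ℤ)
    (hL : L ≤ (Finset.univ.filter fun i => v i ≠ 0).card)
    (S : Finset (Fin m)) (hS : S.card ≤ m')
    (hsupp : ∀ j ∉ S, Matrix.vecMul v Y j = 0)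
    (p : ℝ) (hp : 2 < p) :
    (∑ j, |((Matrix.vecMul v Y j : ℤ) : ℝ)| ^ p) ^ (1 / p)
      ≥ (m' : ℝ) ^ (1 / p - 1 / 2) * ((m : ℝ) * L) ^ ((1 : ℝ) / 2) := by
  have hnorm : (v ᵥ* Y) ⬝ᵥ (v ᵥ* Y) = m * (v ⬝ᵥ v) := by
    simpa using vecMul_dotProduct_vecMul_of_mul_transpose_eq_smul_one
      (mul_transpose_eq_smul_one_of_sign_orthogonal hY horth) v
  have hL2 : (m : ℝ) * L ≤ ∑ j, (((v ᵥ* Y) j : ℤ) : ℝ) ^ 2 := by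
    have hLv : (L : ℤ) ≤ v ⬝ᵥ v :=
      (Nat.cast_le.mpr hL).trans (Int.card_support_le_dotProduct_self v)
    have : (m : ℤ) * L ≤ (v ᵥ* Y) ⬝ᵥ (v ᵥ* Y) :=
      hnorm ▸ mul_le_mul_of_nonneg_left hLv (by positivity)
    simpa [dotProduct, sq] using (Int.cast_le (R := ℝ)).mpr this
  calc (m' : ℝ) ^ (1 / p - 1 / 2) * ((m : ℝ) * L) ^ ((1 : ℝ) / 2)
      ≤ (m' : ℝ) ^ (1 / p - 1 / 2) * (∑ j, (((v ᵥ* Y) j : ℤ) : ℝ) ^ 2) ^ ((1 : ℝ) / 2) := by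
        gcongr
    _ ≤ _ := Real.card_rpow_mul_L2_le_Lp_of_support_subset
        (f := fun j => (((v ᵥ* Y) j : ℤ) : ℝ)) (by simpa using hsupp) hS hp.le

/-- Anti-concentration: if `Y ∈ {±1}^{k×m}` has pairwise orthogonal rows,
    `‖v‖₀ ≥ L`, and all nonzero coordinates of `vY` lie in a set of at most `m' ≤ m`
    columns, then for `p > 2`, `‖vY‖_p ≥ (m')^{1/p-1/2} (m·L)^{1/2}`. -/
theorem stmt15 (k m m' L : ℕ) (Y : Matrix (Fin k) (Fin m) ℤ)
    (hY : ∀ i j, Y i j = 1 ∨ Y i j = -1)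
    (horth : ∀ i j, i ≠ j → ∑ l, Y i l * Y j l = 0)
    (v : Fin k → ℤ)
    (hL : L ≤ (Finset.univ.filter fun i => v i ≠ 0).card)
    (S : Finset (Fin m)) (hS : S.card ≤ m') (hm' : m' ≤ m)
    (hsupp : ∀ j ∉ S, Matrix.vecMul v Y j = 0)
    (p : ℝ) (hp : 2 < p) :
    (∑ j, |((Matrix.vecMul v Y j : ℤ) : ℝ)| ^ p) ^ (1 / p)
      ≥ (m' : ℝ) ^ (1 / p - 1 / 2) * ((m : ℝ) * L) ^ ((1 : ℝ) / 2) :=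
  stmt15_general k m m' L Y hY horth v hL S hS hsupp p hp
end

section
/- Let a CSP have M constraints of arity q over alphabet Σ. Suppose there is a set T of constraints with |T| ≥ K, and for each constraint t ∈ T, a designated satisfying assignment σ_t of its q variables, such that every variable x appearing in any constraint of T has at most h distinct values indicated across all the designated assignments {σ_t : t ∈ T, t contains x}. Then there exists a global assignment satisfying at least K/h^q constraints. -/
/-!
Choose every variable uniformly and independently from the set `S x` of values it receives in
the designated assignments. A designated constraint then sees its own designated assignment with
probability at least `h ^ (-q)`, and by locality is satisfied at least that often, so on average
at least `K / h ^ q` constraints are satisfied, and some assignment attains the average.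
Probabilities are counted as numbers of points of the box `Fintype.piFinset S`.
-/

open Finset

section Subselection

variable {ι κ α β : Type*}

theorem Finset.exists_card_le_mul_card_filter_of_forall_card_le (P : Finset β) (hP : P.Nonempty)
    (T : Finset κ) (R : κ → β → Prop) [∀ t σ, Decidable (R t σ)] (c : ℕ)
    (hR : ∀ t ∈ T, #P ≤ c * #{σ ∈ P | R t σ}) :
    ∃ σ ∈ P, #T ≤ c * #{t ∈ T | R t σ} := by
  refine exists_le_of_sum_le hP ?_
  calc ∑ _ ∈ P, #T = ∑ _ ∈ T, #P := by simp only [sum_const, smul_eq_mul, mul_comm]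
    _ ≤ ∑ t ∈ T, c * #{σ ∈ P | R t σ} := sum_le_sum hR
    _ = ∑ σ ∈ P, c * #{t ∈ T | R t σ} := by
      rw [← mul_sum, ← mul_sum]
      exact congrArg (c * ·) (sum_card_bipartiteAbove_eq_sum_card_bipartiteBelow R)

variable [Fintype ι] [DecidableEq ι] [DecidableEq α]

theorem prod_card_mul_card_filter_eqOn_piFinset (S : ι → Finset α) (U : Finset ι)
    (τ : ι → α) (hτ : ∀ x ∈ U, τ x ∈ S x) :
    (∏ x ∈ U, #(S x)) * #{σ ∈ Fintype.piFinset S | ∀ x ∈ U, σ x = τ x} = ∏ x, #(S x) := by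
  have hbox : {σ ∈ Fintype.piFinset S | ∀ x ∈ U, σ x = τ x} =
      Fintype.piFinset fun x => if x ∈ U then {τ x} else S x := by
    ext σ
    simp only [mem_filter, Fintype.mem_piFinset]
    refine ⟨fun ⟨hS, hU⟩ x => ?_, fun h => ⟨fun x => ?_, fun x hx => ?_⟩⟩
    · split_ifs with hx
      · exact mem_singleton.mpr (hU x hx)
      · exact hS x
    · by_cases hx : x ∈ U
      · have hσx := h x
        rw [if_pos hx, mem_singleton] at hσx
        exact hσx ▸ hτ x hx
      · simpa [hx] using h x
    · simpa [hx] using h x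
  rw [hbox, Fintype.card_piFinset, ← prod_mul_prod_compl U, ← prod_mul_prod_compl U]
  congr 1
  rw [prod_eq_one fun x hx => by rw [if_pos hx, card_singleton], one_mul]
  exact prod_congr rfl fun x hx => by rw [if_neg (mem_compl.mp hx)]

theorem exists_card_le_mul_card_filter_sat (S : ι → Finset α) (hS : ∀ x, (S x).Nonempty)
    (vars : κ → Finset ι) (sat : κ → (ι → α) → Prop) [∀ t, DecidablePred (sat t)]
    (hlocal : ∀ t σ σ', (∀ x ∈ vars t, σ x = σ' x) → (sat t σ ↔ sat t σ'))
    (T : Finset κ) (σd : κ → ι → α) (hσd : ∀ t ∈ T, sat t (σd t))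
    (hmem : ∀ t ∈ T, ∀ x ∈ vars t, σd t x ∈ S x) (c : ℕ)
    (hc : ∀ t ∈ T, ∏ x ∈ vars t, #(S x) ≤ c) :
    ∃ σ : ι → α, #T ≤ c * #{t ∈ T | sat t σ} := by
  obtain ⟨σ, -, hσ⟩ := exists_card_le_mul_card_filter_of_forall_card_le
    (Fintype.piFinset S) (Fintype.piFinset_nonempty.mpr hS) T sat c fun t ht => by
      have hagree_sat : {σ ∈ Fintype.piFinset S | ∀ x ∈ vars t, σ x = σd t x} ⊆
          {σ ∈ Fintype.piFinset S | sat t σ} :=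
        monotone_filter_right _ fun σ _ hσ => (hlocal t σ (σd t) hσ).mpr (hσd t ht)
      calc #(Fintype.piFinset S) = ∏ x, #(S x) := Fintype.card_piFinset S
        _ = (∏ x ∈ vars t, #(S x)) * #{σ ∈ Fintype.piFinset S | ∀ x ∈ vars t, σ x = σd t x} :=
          (prod_card_mul_card_filter_eqOn_piFinset S _ _ (hmem t ht)).symm
        _ ≤ c * #{σ ∈ Fintype.piFinset S | sat t σ} :=
          Nat.mul_le_mul (hc t ht) (card_le_card hagree_sat)
  exact ⟨σ, hσ⟩

end Subselection

/-- Subselection: if at least `K` constraints have designated satisfying assignments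
    and every variable gets at most `h` distinct designated values, then some global
    assignment satisfies at least `K/h^q` constraints. -/
theorem stmt17 {A : Type*} [Nonempty A] [DecidableEq A] (M N q K h : ℕ)
    (vars : Fin M → Finset (Fin N))
    (hq : ∀ t, (vars t).card = q)
    (sat : Fin M → (Fin N → A) → Prop)
    (hlocal : ∀ t σ σ', (∀ x ∈ vars t, σ x = σ' x) → (sat t σ ↔ sat t σ'))
    (T : Finset (Fin M)) (hK : K ≤ T.card)
    (σd : Fin M → Fin N → A)
    (hσd : ∀ t ∈ T, sat t (σd t))
    (hh : ∀ x : Fin N,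
      ((T.filter fun t => x ∈ vars t).image fun t => σd t x).card ≤ h) :
    ∃ σ : Fin N → A,
      (K : ℝ) / (h : ℝ) ^ q ≤ (Nat.card {t : Fin M // sat t σ} : ℝ) := by
  classical
  set D : Fin N → Finset A := fun x => (T.filter fun t => x ∈ vars t).image fun t => σd t x
  -- The box must be nonempty, so variables outside every designated scope get one arbitrary value.
  set S : Fin N → Finset A := fun x => if (D x).Nonempty then D x else {Classical.arbitrary A}
  have hD : ∀ t ∈ T, ∀ x ∈ vars t, σd t x ∈ D x := fun t ht x hx =>
    mem_image_of_mem _ (mem_filter.mpr ⟨ht, hx⟩)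
  have hSD : ∀ t ∈ T, ∀ x ∈ vars t, S x = D x := fun t ht x hx => if_pos ⟨_, hD t ht x hx⟩
  obtain ⟨σ, hσ⟩ := exists_card_le_mul_card_filter_sat S
    (fun x => by by_cases hx : (D x).Nonempty <;> simp [S, hx])
    vars sat hlocal T σd hσd (fun t ht x hx => hSD t ht x hx ▸ hD t ht x hx) (h ^ q)
    fun t ht => hq t ▸ prod_le_pow_card _ _ _ fun x hx => hSD t ht x hx ▸ hh x
  have hsat : #{t ∈ T | sat t σ} ≤ Nat.card {t : Fin M // sat t σ} := by
    rw [Nat.card_eq_fintype_card, Fintype.card_subtype]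
    exact card_le_card (monotone_filter_left _ (subset_univ T))
  refine ⟨σ, div_le_of_le_mul₀ (by positivity) (by positivity) ?_⟩
  rw [mul_comm]
  exact_mod_cast hK.trans (hσ.trans (Nat.mul_le_mul_left _ hsat))
end
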